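/- Let $(P_t)$ be a Markov semigroup on $C_b(\mathbb{R})$, $u\in C^2(\mathbb{R})\cap C_b(\mathbb{R})$ and $g\in C_b(\mathbb{R})$ with $P_t u(x) = u(x) + \int_0^t P_s g(x)\,ds$ for $t\in[0,1]$. If the uniform gradient estimate $\|DP_t f\|_\infty \le (c/\sqrt{t})\|f\|_\infty$ holds for all $t\in(0,1]$ and $f\in C_b(\mathbb{R})$ (with each $P_tf$ differentiable), then $u$ has bounded derivative: $\|u'\|_\infty \le \|DP_1 u\|_\infty + 2c\|g\|_\infty < \infty$. -/

import Mathlib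

/-!
Put `G y = ∫₀¹ P_s g y ds`, so that `G = P₁u - u` by the identity at `t = 1`. The gradient
estimate makes `y ↦ P_s g y` Lipschitz with constant `c‖g‖_∞ / √s`, which is integrable on
`(0, 1]` with integral `2c‖g‖_∞`; hence `G` is `2c‖g‖_∞`-Lipschitz and `u' = (P₁u)' - G'`.

Nothing makes `s ↦ P_s g y` measurable, so the integral may take the junk value `0` at some `y`.
`G` is Lipschitz on the set `E` of good points and vanishes off it; since `G` is differentiable,
its derivative at `x` can be read off along whichever of `E`, `Eᶜ` accumulates at `x`.
-/

open Real Set Filter Topology MeasureTheory intervalIntegral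

lemma abs_sub_le_of_abs_deriv_le {f : ℝ → ℝ} {C : ℝ} (hf : Differentiable ℝ f)
    (hC : ∀ x, |deriv f x| ≤ C) (y z : ℝ) : |f y - f z| ≤ C * |y - z| := by
  simpa only [Real.norm_eq_abs] using
    convex_univ.norm_image_sub_le_of_norm_deriv_le (fun x _ => hf x) (fun x _ => hC x)
      (mem_univ z) (mem_univ y)

lemma div_sqrt_eq_mul_rpow (L : ℝ) {s : ℝ} (hs : 0 ≤ s) : L / √s = L * s ^ (-(1 / 2) : ℝ) := by
  rw [rpow_neg hs, ← sqrt_eq_rpow, div_eq_mul_inv]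

lemma eqOn_div_sqrt {L t : ℝ} (ht : 0 ≤ t) :
    EqOn (fun s => L / √s) (fun s => L * s ^ (-(1 / 2) : ℝ)) (uIcc 0 t) := fun s hs =>
  div_sqrt_eq_mul_rpow L (by rw [uIcc_of_le ht] at hs; exact hs.1)

lemma intervalIntegrable_div_sqrt (L : ℝ) {t : ℝ} (ht : 0 ≤ t) :
    IntervalIntegrable (fun s => L / √s) volume 0 t :=
  ((intervalIntegrable_rpow' (r := -(1 / 2)) (by norm_num)).const_mul L).congr
    ((eqOn_div_sqrt ht).symm.mono uIoc_subset_uIcc)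

lemma integral_div_sqrt (L : ℝ) {t : ℝ} (ht : 0 ≤ t) : ∫ s in (0:ℝ)..t, L / √s = 2 * L * √t := by
  rw [integral_congr (eqOn_div_sqrt ht), intervalIntegral.integral_const_mul,
    integral_rpow (by norm_num), sqrt_eq_rpow]
  norm_num
  ring

lemma abs_integral_sub_le_of_abs_sub_le_div_sqrt {φ ψ : ℝ → ℝ} {L t : ℝ} (ht : 0 ≤ t)
    (hφ : IntervalIntegrable φ volume 0 t) (hψ : IntervalIntegrable ψ volume 0 t)
    (h : ∀ s ∈ Ioc 0 t, |φ s - ψ s| ≤ L / √s) :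
    |(∫ s in (0:ℝ)..t, φ s) - ∫ s in (0:ℝ)..t, ψ s| ≤ 2 * L * √t := by
  rw [← integral_sub hφ hψ, ← integral_div_sqrt L ht]
  exact norm_integral_le_of_norm_le ht
    (ae_of_all _ fun s hs => (norm_eq_abs _).trans_le (h s hs)) (intervalIntegrable_div_sqrt L ht)

lemma abs_le_of_hasDerivAt_of_abs_sub_le {f : ℝ → ℝ} {f' x K : ℝ} {S : Set ℝ}
    (hf : HasDerivAt f f' x) (hS : (𝓝[S \ {x}] x).NeBot)
    (hK : ∀ y ∈ S, |f y - f x| ≤ K * |y - x|) : |f'| ≤ K := by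
  have hslope : Tendsto (fun y => |slope f x y|) (𝓝[S \ {x}] x) (𝓝 |f'|) :=
    (hasDerivAt_iff_tendsto_slope.mp hf).abs.mono_left
      (nhdsWithin_mono x (sdiff_subset_compl S {x}))
  refine le_of_tendsto hslope (eventually_nhdsWithin_of_forall fun y hy => ?_)
  rw [slope_def_field, abs_div, div_le_iff₀ (abs_pos.mpr (sub_ne_zero.mpr hy.2))]
  exact hK y hy.1

lemma abs_sub_le_of_mem_closure {f : ℝ → ℝ} {E : Set ℝ} {K : ℝ} (hf : Continuous f)
    (hE : ∀ y ∈ E, ∀ z ∈ E, |f y - f z| ≤ K * |y - z|) {x : ℝ} (hx : x ∈ closure E) :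
    ∀ y ∈ E, |f y - f x| ≤ K * |y - x| := fun y hy =>
  closure_minimal (t := {z | |f y - f z| ≤ K * |y - z|}) (hE y hy)
    (isClosed_le (by fun_prop) (by fun_prop)) hx

lemma abs_deriv_le_of_lipschitz_on_of_eq_zero_off {G : ℝ → ℝ} {E : Set ℝ} {K : ℝ}
    (hG : Differentiable ℝ G) (hK : 0 ≤ K)
    (hE : ∀ y ∈ E, ∀ z ∈ E, |G y - G z| ≤ K * |y - z|) (hzero : ∀ y ∉ E, G y = 0) (x : ℝ) :
    |deriv G x| ≤ K := by
  have hsplit : (𝓝[E \ {x}] x ⊔ 𝓝[Eᶜ \ {x}] x).NeBot := by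
    rw [← nhdsWithin_union, ← union_sdiff_distrib, union_compl_self, ← compl_eq_univ_sdiff]
    infer_instance
  rcases sup_neBot.mp hsplit with hE' | hEc
  · refine abs_le_of_hasDerivAt_of_abs_sub_le (hG x).hasDerivAt hE'
      (abs_sub_le_of_mem_closure hG.continuous hE ?_)
    exact closure_mono sdiff_subset (mem_closure_iff_nhdsWithin_neBot.mpr hE')
  · have hGx : G x = 0 := by
      have hx : x ∈ closure Eᶜ :=
        closure_mono sdiff_subset (mem_closure_iff_nhdsWithin_neBot.mpr hEc)
      exact EqOn.closure (g := fun _ => 0) hzero hG.continuous continuous_const hx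
    refine abs_le_of_hasDerivAt_of_abs_sub_le (hG x).hasDerivAt hEc fun y hy => ?_
    rw [hzero y hy, hGx, sub_zero, abs_zero]
    positivity

lemma abs_deriv_integral_le_of_abs_sub_le_div_sqrt {F : ℝ → ℝ → ℝ} {L t : ℝ} (ht : 0 ≤ t)
    (hL : 0 ≤ L) (hF : ∀ s ∈ Ioc 0 t, ∀ y z, |F s y - F s z| ≤ L / √s * |y - z|)
    (hdiff : Differentiable ℝ fun y => ∫ s in (0:ℝ)..t, F s y) (x : ℝ) :
    |deriv (fun y => ∫ s in (0:ℝ)..t, F s y) x| ≤ 2 * L * √t := by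
  refine abs_deriv_le_of_lipschitz_on_of_eq_zero_off
    (E := {y | IntervalIntegrable (F · y) volume 0 t}) hdiff (by positivity)
    (fun y hy z hz => ?_) (fun y hy => integral_undef hy) x
  calc |(∫ s in (0:ℝ)..t, F s y) - ∫ s in (0:ℝ)..t, F s z|
      ≤ 2 * (L * |y - z|) * √t :=
        abs_integral_sub_le_of_abs_sub_le_div_sqrt ht hy hz fun s hs =>
          (hF s hs y z).trans_eq (by ring)
    _ = 2 * L * √t * |y - z| := by ring

/-- If `P_t u = u + ∫₀ᵗ P_s g ds` for a Markov semigroup `(P_t)` satisfying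
the uniform gradient estimate `‖DP_t f‖_∞ ≤ (c/√t)‖f‖_∞`, then `u` has
bounded derivative: `‖u'‖_∞ ≤ ‖DP₁u‖_∞ + 2c‖g‖_∞`. -/
theorem stmt17 (P : ℝ → (ℝ → ℝ) → (ℝ → ℝ)) (c : ℝ) (hcpos : 0 < c)
    (u g : ℝ → ℝ)
    (hu_cont : ContDiff ℝ 2 u) (Mu : ℝ) (hu_bdd : ∀ x, |u x| ≤ Mu)
    (hg_cont : Continuous g) (Mg : ℝ) (hg_bdd : ∀ x, |g x| ≤ Mg)
    (hdiff : ∀ t ∈ Set.Ioc (0:ℝ) 1, ∀ f : ℝ → ℝ, Continuous f →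
      (∃ M, ∀ x, |f x| ≤ M) → Differentiable ℝ (P t f))
    (hgrad : ∀ t ∈ Set.Ioc (0:ℝ) 1, ∀ f : ℝ → ℝ, Continuous f →
      ∀ M : ℝ, (∀ x, |f x| ≤ M) →
      ∀ x, |deriv (P t f) x| ≤ c / Real.sqrt t * M)
    (hident : ∀ t ∈ Set.Icc (0:ℝ) 1, ∀ x : ℝ,
      P t u x = u x + ∫ s in (0:ℝ)..t, P s g x) :
    ∀ x : ℝ, |deriv u x| ≤ (⨆ y : ℝ, |deriv (P 1 u) y|) + 2 * c * Mg := by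
  intro x
  have h1 : (1:ℝ) ∈ Ioc 0 1 := ⟨one_pos, le_rfl⟩
  have hu : Differentiable ℝ u := hu_cont.differentiable (by norm_num)
  have hP1u : Differentiable ℝ (P 1 u) := hdiff 1 h1 u hu_cont.continuous ⟨Mu, hu_bdd⟩
  have hG : (fun y => ∫ s in (0:ℝ)..1, P s g y) = P 1 u - u :=
    funext fun y => by simp [hident 1 ⟨zero_le_one, le_rfl⟩ y]
  have hPg_lip : ∀ s ∈ Ioc 0 1, ∀ y z, |P s g y - P s g z| ≤ c * Mg / √s * |y - z| :=
    fun s hs y z => (abs_sub_le_of_abs_deriv_le (hdiff s hs g hg_cont ⟨Mg, hg_bdd⟩)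
      (hgrad s hs g hg_cont Mg hg_bdd) y z).trans_eq (by ring)
  have hG_deriv : |deriv (P 1 u - u) x| ≤ 2 * c * Mg := by
    have hMg : 0 ≤ Mg := (abs_nonneg _).trans (hg_bdd 0)
    have := abs_deriv_integral_le_of_abs_sub_le_div_sqrt zero_le_one (by positivity) hPg_lip
      (hG ▸ hP1u.sub hu) x
    rwa [hG, sqrt_one, mul_one, ← mul_assoc] at this
  have hsup : |deriv (P 1 u) x| ≤ ⨆ y, |deriv (P 1 u) y| := by
    refine le_ciSup (f := fun y => |deriv (P 1 u) y|) ⟨c * Mu, ?_⟩ x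
    rintro _ ⟨y, rfl⟩
    simpa only [sqrt_one, div_one] using hgrad 1 h1 u hu_cont.continuous Mu hu_bdd y
  rw [deriv_sub (hP1u x) (hu x)] at hG_deriv
  calc |deriv u x| = |deriv (P 1 u) x - (deriv (P 1 u) x - deriv u x)| := by ring_nf
    _ ≤ |deriv (P 1 u) x| + |deriv (P 1 u) x - deriv u x| := abs_sub _ _
    _ ≤ (⨆ y, |deriv (P 1 u) y|) + 2 * c * Mg := add_le_add hsup hG_deriv
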